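/- Let A be a unital complex C*-algebra, let a ∈ A be selfadjoint and let b ∈ A. Let f : ℝ → ℂ be a bounded continuous integrable function such that p ↦ p·f̂(p) is integrable. Then ‖f(a)·b − b·f(a)‖ ≤ ‖a·b − b·a‖ · (2π)^{−1/2} · ∫_ℝ |p·f̂(p)| dp, where f(a) denotes the continuous functional calculus of a applied to f. -/

import Mathlib

open MeasureTheory

/-- The Fourier transform `f̂(p) = (2π)^{-1/2} ∫ f(x) e^{-ixp} dx` of a function `f : ℝ → ℂ`. -/
noncomputable def fourierHat (f : ℝ → ℂ) (p : ℝ) : ℂ :=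
  (Real.sqrt (2 * Real.pi) : ℂ)⁻¹ * ∫ x : ℝ, f x * Complex.exp (-(Complex.I * x * p))

/-!
Fourier inversion writes `f(a) = (2π)^{-1/2} ∫ f̂(p) e^{ipa} dp`, so `[f(a), b]` is the integral of
`f̂(p) [e^{ipa}, b]`. Each `e^{ipa}` is unitary, and differentiating `s ↦ e^{i(1-s)pa} b e^{ispa}`
shows `‖[e^{ipa}, b]‖ ≤ |p| ‖[a, b]‖`.
-/

open Complex Real NormedSpace
open scoped FourierTransform

theorem Continuous.integrable_of_integrable_ofReal_mul {g : ℝ → ℂ} (hg : Continuous g)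
    (h : Integrable fun p : ℝ => (p : ℂ) * g p) : Integrable g := by
  have h_Icc : IntegrableOn g (Set.Icc (-1) 1) := hg.integrableOn_Icc
  have h_compl : IntegrableOn g (Set.Icc (-1) 1)ᶜ := by
    refine Integrable.mono h.integrableOn hg.aestronglyMeasurable.restrict ?_
    refine (ae_restrict_iff' measurableSet_Icc.compl).2 (.of_forall fun p hp => ?_)
    have hp : 1 ≤ |p| := by
      rw [Set.mem_compl_iff, Set.mem_Icc, ← abs_le] at hp
      exact (not_le.1 hp).le
    rw [norm_mul, norm_real, Real.norm_eq_abs]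
    exact le_mul_of_one_le_left (norm_nonneg _) hp
  simpa using h_Icc.union h_compl

theorem fourierHat_eq_fourier (f : ℝ → ℂ) (p : ℝ) :
    fourierHat f p = (√(2 * π) : ℂ)⁻¹ * 𝓕 f (p / (2 * π)) := by
  rw [fourierHat, Real.fourier_real_eq_integral_exp_smul]
  congr 2 with x
  rw [smul_eq_mul, mul_comm]
  congr 2
  push_cast
  field_simp

theorem fourier_eq_fourierHat (f : ℝ → ℂ) (ξ : ℝ) :
    𝓕 f ξ = (√(2 * π) : ℂ) * fourierHat f (2 * π * ξ) := by
  rw [fourierHat_eq_fourier, mul_div_cancel_left₀ _ (by positivity), ← mul_assoc,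
    mul_inv_cancel₀ (by exact_mod_cast (by positivity : √(2 * π) ≠ 0)), one_mul]

theorem continuous_fourierHat {f : ℝ → ℂ} (hf : Integrable f) : Continuous (fourierHat f) := by
  have : Continuous (𝓕 f) := VectorFourier.fourierIntegral_continuous
    Real.continuous_fourierChar continuous_inner hf
  simp_rw [funext (fourierHat_eq_fourier f)]
  fun_prop

theorem fourierHat_inversion {f : ℝ → ℂ} (hf_cont : Continuous f) (hf_int : Integrable f)
    (hhat_int : Integrable (fourierHat f)) (x : ℝ) :
    f x = (√(2 * π) : ℂ)⁻¹ * ∫ p : ℝ, fourierHat f p * cexp (I * p * x) := by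
  have h𝓕_int : Integrable (𝓕 f) := by
    simp_rw [funext (fourier_eq_fourierHat f)]
    exact (hhat_int.comp_mul_left' (by positivity)).const_mul _
  calc f x = 𝓕⁻ (𝓕 f) x := by rw [hf_cont.fourierInv_fourier_eq hf_int h𝓕_int]
    _ = ∫ v : ℝ, (√(2 * π) : ℂ) *
          (fun p : ℝ => fourierHat f p * cexp (I * p * x)) (2 * π * v) := by
      rw [Real.fourierInv_eq']
      congr 1 with v
      rw [fourier_eq_fourierHat, smul_eq_mul, RCLike.inner_apply, conj_trivial]
      push_cast
      ring_nf
    _ = (√(2 * π) : ℂ)⁻¹ * ∫ p : ℝ, fourierHat f p * cexp (I * p * x) := by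
      rw [integral_const_mul,
        Measure.integral_comp_mul_left (fun p : ℝ => fourierHat f p * cexp (I * p * x)),
        abs_of_pos (by positivity), Complex.real_smul, ← mul_assoc]
      congr 1
      push_cast
      field_simp
      rw [← ofReal_pow, Real.sq_sqrt (by positivity), ofReal_mul, ofReal_ofNat]

theorem norm_smul_mul_sub_mul_smul {𝕜 A : Type*} [NormedField 𝕜] [NormedRing A]
    [NormedAlgebra 𝕜 A] (c : 𝕜) (x b : A) :
    ‖c • x * b - b * (c • x)‖ = ‖c‖ * ‖x * b - b * x‖ := by
  rw [smul_mul_assoc, mul_smul_comm, ← smul_sub, norm_smul]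

theorem norm_commutator_integral_le {α A : Type*} [MeasurableSpace α] {μ : Measure α}
    [NormedRing A] [NormedAlgebra ℝ A] (u : α → A) (b : A) :
    ‖(∫ x, u x ∂μ) * b - b * ∫ x, u x ∂μ‖ ≤ ∫ x, ‖u x * b - b * u x‖ ∂μ := by
  by_cases hu : Integrable u μ
  · rw [← integral_mul_const_of_integrable hu, ← integral_const_mul_of_integrable hu,
      ← integral_sub (hu.mul_const b) (hu.const_mul b)]
    exact norm_integral_le_integral_norm _
  · rw [integral_undef hu, zero_mul, mul_zero, sub_zero, norm_zero]
    exact integral_nonneg fun _ => norm_nonneg _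

theorem hasDerivAt_exp_smul_mul_mul_exp_smul {𝔸 : Type*} [NormedRing 𝔸] [NormedAlgebra ℝ 𝔸]
    [CompleteSpace 𝔸] (c b : 𝔸) (s : ℝ) :
    HasDerivAt (fun t : ℝ => exp ((1 - t) • c) * b * exp (t • c))
      (exp ((1 - s) • c) * (b * c - c * b) * exp (s • c)) s := by
  have h_left : HasDerivAt (fun t : ℝ => exp ((1 - t) • c)) (-(exp ((1 - s) • c) * c)) s := by
    simpa [Function.comp_def] using
      (hasDerivAt_exp_smul_const c (1 - s)).scomp s ((hasDerivAt_id s).const_sub 1)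
  refine ((h_left.mul_const b).mul (hasDerivAt_exp_smul_const c s)).congr_deriv ?_
  rw [← ((Commute.refl c).smul_right s).exp_right.eq]
  noncomm_ring

section CStarAlgebra

variable {A : Type*} [CStarAlgebra A]

theorem norm_commutator_exp_le {c : A} (hc : c ∈ skewAdjoint A) (b : A) :
    ‖exp c * b - b * exp c‖ ≤ ‖c * b - b * c‖ := by
  let : NormedAlgebra ℚ A := .restrictScalars ℚ ℂ A
  have h_unitary (t : ℝ) : exp (t • c) ∈ unitary A :=
    exp_mem_unitary_of_mem_skewAdjoint (skewAdjoint.smul_mem t hc)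
  have h_bound (s : ℝ) :
      ‖exp ((1 - s) • c) * (b * c - c * b) * exp (s • c)‖ ≤ ‖c * b - b * c‖ := by
    rw [CStarRing.norm_mul_mem_unitary _ (h_unitary s),
      CStarRing.norm_mem_unitary_mul _ (h_unitary (1 - s)), norm_sub_rev]
  have := (convex_univ (𝕜 := ℝ) (E := ℝ)).norm_image_sub_le_of_norm_hasDerivWithin_le
    (fun s _ => (hasDerivAt_exp_smul_mul_mul_exp_smul c b s).hasDerivWithinAt)
    (fun s _ => h_bound s) (Set.mem_univ 0) (Set.mem_univ 1)
  simpa [norm_sub_rev] using this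

theorem norm_commutator_exp_I_mul_smul_le {a : A} (ha : IsSelfAdjoint a) (b : A) (t : ℝ) :
    ‖exp ((I * t) • a) * b - b * exp ((I * t) • a)‖ ≤ |t| * ‖a * b - b * a‖ := by
  have hc : (I * t) • a ∈ skewAdjoint A :=
    ha.smul_mem_skewAdjoint (by simp [skewAdjoint.mem_iff])
  refine (norm_commutator_exp_le hc b).trans_eq ?_
  rw [norm_smul_mul_sub_mul_smul]
  simp

theorem cfc_const_mul_cexp_mul (a : A) [IsStarNormal a] (c w : ℂ) :
    cfc (fun z => c * cexp (w * z)) a = c • exp (w • a) := by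
  rw [cfc_const_mul c _ a, ← CFC.complex_exp_eq_normedSpace_exp, ← cfc_comp_smul w cexp a]
  rfl

theorem cfc_re_eq_integral_fourierHat_smul_exp {a : A} (ha : IsSelfAdjoint a) {f : ℝ → ℂ}
    (hf_cont : Continuous f) (hf_int : Integrable f) (hhat_int : Integrable (fourierHat f)) :
    cfc (fun z : ℂ => f z.re) a =
      (√(2 * π) : ℂ)⁻¹ • ∫ p : ℝ, fourierHat f p • exp ((I * p) • a) := by
  have : IsStarNormal a := ha.isStarNormal
  set F : ℝ → ℂ → ℂ := fun p z => (√(2 * π) : ℂ)⁻¹ * fourierHat f p * cexp (I * p * z)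
  have hF_cont : Continuous (Function.uncurry F) := by
    have := continuous_fourierHat hf_int
    fun_prop
  have hF_bound (p : ℝ) (z : ℂ) (hz : z ∈ spectrum ℂ a) :
      ‖F p z‖ ≤ ‖(√(2 * π) : ℂ)⁻¹ * fourierHat f p‖ := by
    rw [ha.mem_spectrum_eq_re hz, norm_mul, mul_assoc I, ← ofReal_mul, norm_exp_I_mul_ofReal,
      mul_one]
  calc cfc (fun z : ℂ => f z.re) a = cfc (fun z => ∫ p, F p z) a := by
        refine cfc_congr fun z hz => ?_
        rw [fourierHat_inversion hf_cont hf_int hhat_int z.re, ← ha.mem_spectrum_eq_re hz,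
          ← integral_const_mul]
        simp only [F, mul_assoc]
    _ = ∫ p, cfc (F p) a :=
        cfc_integral F _ a hF_cont.continuousOn (.of_forall hF_bound)
          (hhat_int.const_mul _).norm.hasFiniteIntegral
    _ = _ := by
        simp only [F, cfc_const_mul_cexp_mul, mul_smul]
        exact integral_smul _ _

end CStarAlgebra

theorem norm_commutator_cfc_le_general
    {A : Type*} [CStarAlgebra A] (a b : A) (ha : IsSelfAdjoint a)
    (f : ℝ → ℂ) (hf_cont : Continuous f)
    (hf_int : Integrable f)
    (hphat_int : Integrable (fun p : ℝ => (p : ℂ) * fourierHat f p)) :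
    ‖cfc (fun z : ℂ => f z.re) a * b - b * cfc (fun z : ℂ => f z.re) a‖
      ≤ ‖a * b - b * a‖ *
          ((Real.sqrt (2 * Real.pi))⁻¹ * ∫ p : ℝ, ‖(p : ℂ) * fourierHat f p‖) := by
  have hhat_int : Integrable (fourierHat f) :=
    (continuous_fourierHat hf_int).integrable_of_integrable_ofReal_mul hphat_int
  have h_integrand (p : ℝ) :
      ‖fourierHat f p • exp ((I * p) • a) * b - b * (fourierHat f p • exp ((I * p) • a))‖
        ≤ ‖a * b - b * a‖ * ‖(p : ℂ) * fourierHat f p‖ := by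
    rw [norm_smul_mul_sub_mul_smul, norm_mul, norm_real, Real.norm_eq_abs]
    calc _ ≤ ‖fourierHat f p‖ * (|p| * ‖a * b - b * a‖) := by
          gcongr
          exact norm_commutator_exp_I_mul_smul_le ha b p
      _ = _ := by ring
  rw [cfc_re_eq_integral_fourierHat_smul_exp ha hf_cont hf_int hhat_int,
    norm_smul_mul_sub_mul_smul, norm_inv, norm_real, Real.norm_of_nonneg (Real.sqrt_nonneg _),
    mul_left_comm, ← integral_const_mul]
  gcongr
  calc _ ≤ _ := norm_commutator_integral_le _ b
    _ ≤ _ := integral_mono_of_nonneg (.of_forall fun _ => norm_nonneg _)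
        (hphat_int.norm.const_mul _) (.of_forall h_integrand)

/-- **commutator estimate.** For a selfadjoint `a` and arbitrary `b` in a unital
complex C*-algebra, and a bounded continuous integrable `f : ℝ → ℂ` with `p·f̂(p)` integrable,
`‖f(a)b − b·f(a)‖ ≤ ‖ab − ba‖ · (2π)^{-1/2} · ∫ |p·f̂(p)| dp`. -/
theorem norm_commutator_cfc_le
    {A : Type*} [CStarAlgebra A] (a b : A) (ha : IsSelfAdjoint a)
    (f : ℝ → ℂ) (hf_cont : Continuous f) (hf_bdd : ∃ C : ℝ, ∀ x : ℝ, ‖f x‖ ≤ C)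
    (hf_int : Integrable f)
    (hphat_int : Integrable (fun p : ℝ => (p : ℂ) * fourierHat f p)) :
    ‖cfc (fun z : ℂ => f z.re) a * b - b * cfc (fun z : ℂ => f z.re) a‖
      ≤ ‖a * b - b * a‖ *
          ((Real.sqrt (2 * Real.pi))⁻¹ * ∫ p : ℝ, ‖(p : ℂ) * fourierHat f p‖) :=
  norm_commutator_cfc_le_general a b ha f hf_cont hf_int hphat_int
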